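/- Let n be a natural number. For all 𝔞, 𝔟 ∈ M_n(ℤ) one has t_𝔞 ∘ t_𝔟 = t_{𝔞 * 𝔟} as endomorphisms of G_n. -/
import Mathlib


/-- The defining relations of the combinatorial Hantzsche-Wendt group `G_n`:
`x_i⁻¹ x_j² x_i = x_j⁻²` for all `i ≠ j`, written as relators. -/
def HWrels (n : ℕ) : Set (FreeGroup (Fin n)) :=
  {r | ∃ i j : Fin n, i ≠ j ∧
    r = (FreeGroup.of i)⁻¹ * FreeGroup.of j ^ 2 * FreeGroup.of i * FreeGroup.of j ^ 2}

/-- The combinatorial Hantzsche-Wendt group `G_n`. -/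
abbrev HW (n : ℕ) : Type := PresentedGroup (HWrels n)

/-- The generators `x_1, …, x_n` of `G_n`. -/
def x (n : ℕ) (i : Fin n) : HW n := PresentedGroup.of i

/-- For an `n × n` integer matrix `𝔞 = [a_ij]`, the element
`a_i = (x_1²)^{a_i1} ⋯ (x_n²)^{a_in}` of `A_n ≤ G_n`. -/
def aElt (n : ℕ) (𝔞 : Matrix (Fin n) (Fin n) ℤ) (i : Fin n) : HW n :=
  ((List.finRange n).map fun j => (x n j ^ 2) ^ 𝔞 i j).prod

/-- The binary operation `𝔞 * 𝔟 = [c_ij]`, `c_ij = a_ij + (1 + 2 a_jj) b_ij`,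
on `M = M_n(ℤ)`. -/
def mstar (n : ℕ) (𝔞 𝔟 : Matrix (Fin n) (Fin n) ℤ) : Matrix (Fin n) (Fin n) ℤ :=
  fun i j => 𝔞 i j + (1 + 2 * 𝔞 j j) * 𝔟 i j

namespace HWaux

variable {n : ℕ}

lemma rel1 (i j : Fin n) (hij : i ≠ j) :
    (x n i)⁻¹ * (x n j) ^ 2 * x n i * (x n j) ^ 2 = 1 := by
  have hmem : ((FreeGroup.of i)⁻¹ * FreeGroup.of j ^ 2 * FreeGroup.of i * FreeGroup.of j ^ 2 :
      FreeGroup (Fin n)) ∈ Subgroup.normalClosure (HWrels n) :=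
    Subgroup.subset_normalClosure ⟨i, j, hij, rfl⟩
  have h1 : (PresentedGroup.mk (HWrels n))
      ((FreeGroup.of i)⁻¹ * FreeGroup.of j ^ 2 * FreeGroup.of i * FreeGroup.of j ^ 2) = 1 :=
    (QuotientGroup.eq_one_iff _).mpr hmem
  simpa [map_mul, map_inv, map_pow, x, PresentedGroup.of] using h1

lemma conj_sq (i j : Fin n) (hij : i ≠ j) :
    (x n i)⁻¹ * (x n j) ^ 2 * x n i = ((x n j) ^ 2)⁻¹ :=
  mul_eq_one_iff_eq_inv.mp (rel1 i j hij)

lemma comm_sq (j k : Fin n) : Commute ((x n j) ^ 2) ((x n k) ^ 2) := by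
  rcases eq_or_ne j k with rfl | hjk
  · exact Commute.refl _
  · have h := conj_sq j k hjk
    have h' : x n k ^ 2 * x n j = x n j * (x n k ^ 2)⁻¹ := by
      rw [← h]; group
    have h2 : (x n k ^ 2)⁻¹ * x n j = x n j * x n k ^ 2 := by
      have e : x n k ^ 2 * (x n j * x n k ^ 2) = x n j := by
        rw [← mul_assoc, h']; group
      calc (x n k ^ 2)⁻¹ * x n j
          = (x n k ^ 2)⁻¹ * (x n k ^ 2 * (x n j * x n k ^ 2)) := by rw [e]
        _ = x n j * x n k ^ 2 := by group
    show x n j ^ 2 * x n k ^ 2 = x n k ^ 2 * x n j ^ 2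
    calc x n j ^ 2 * x n k ^ 2 = x n j * (x n j * x n k ^ 2) := by rw [sq, mul_assoc]
      _ = x n j * ((x n k ^ 2)⁻¹ * x n j) := by rw [h2]
      _ = x n j * (x n k ^ 2)⁻¹ * x n j := by group
      _ = (x n k ^ 2 * x n j) * x n j := by rw [h']
      _ = x n k ^ 2 * x n j ^ 2 := by rw [mul_assoc, ← sq]

/-- product over a list -/
def Q (l : List (Fin n)) (c : Fin n → ℤ) : HW n :=
  (l.map fun j => ((x n j) ^ 2) ^ c j).prod

lemma comm_Q (k : Fin n) (b : ℤ) (l : List (Fin n)) (c : Fin n → ℤ) :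
    Commute (((x n k) ^ 2) ^ b) (Q l c) := by
  induction l with
  | nil => simp [Q]
  | cons a t ih =>
      have : Q (a :: t) c = ((x n a) ^ 2) ^ c a * Q t c := by simp [Q]
      rw [this]
      exact ((comm_sq k a).zpow_zpow b (c a)).mul_right ih

lemma Q_add (l : List (Fin n)) (c d : Fin n → ℤ) :
    Q l (c + d) = Q l c * Q l d := by
  induction l with
  | nil => simp [Q]
  | cons a t ih =>
      have h1 : ∀ e : Fin n → ℤ, Q (a :: t) e = ((x n a) ^ 2) ^ e a * Q t e := by
        intro e; simp [Q]
      rw [h1, h1, h1, ih]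
      have hc : Commute (((x n a) ^ 2) ^ d a) (Q t c) := comm_Q a (d a) t c
      calc ((x n a) ^ 2) ^ (c + d) a * (Q t c * Q t d)
          = ((x n a) ^ 2) ^ c a * (((x n a) ^ 2) ^ d a * Q t c) * Q t d := by
            rw [Pi.add_apply, zpow_add]; group
        _ = ((x n a) ^ 2) ^ c a * (Q t c * ((x n a) ^ 2) ^ d a) * Q t d := by rw [hc.eq]
        _ = ((x n a) ^ 2) ^ c a * Q t c * (((x n a) ^ 2) ^ d a * Q t d) := by group

lemma Q_zero (l : List (Fin n)) (c : Fin n → ℤ) (hc : ∀ k ∈ l, c k = 0) :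
    Q l c = 1 := by
  induction l with
  | nil => rfl
  | cons a t ih =>
      have : Q (a :: t) c = ((x n a) ^ 2) ^ c a * Q t c := by simp [Q]
      rw [this, hc a (by simp), ih fun k hk => hc k (by simp [hk])]
      simp

lemma Q_delta (l : List (Fin n)) (hl : l.Nodup) (j : Fin n) (hj : j ∈ l) (m : ℤ)
    (c : Fin n → ℤ) (hc : ∀ k, c k = if k = j then m else 0) :
    Q l c = ((x n j) ^ 2) ^ m := by
  induction l with
  | nil => simp at hj
  | cons a t ih =>
      have hq : Q (a :: t) c = ((x n a) ^ 2) ^ c a * Q t c := by simp [Q]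
      rcases eq_or_ne a j with rfl | haj
      · have hnt : a ∉ t := (List.nodup_cons.mp hl).1
        have : Q t c = 1 := Q_zero t c fun k hk => by
          rw [hc k, if_neg]; rintro rfl; exact hnt hk
        rw [hq, this, hc a, if_pos rfl, mul_one]
      · have hjt : j ∈ t := by
          rcases List.mem_cons.mp hj with h | h
          · exact absurd h.symm haj
          · exact h
        rw [hq, hc a, if_neg haj, ih (List.nodup_cons.mp hl).2 hjt]
        simp

lemma conj_Q (i : Fin n) (l : List (Fin n)) (c : Fin n → ℤ) :
    (x n i)⁻¹ * Q l c * x n i = Q l (fun k => if k = i then c k else -(c k)) := by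
  induction l with
  | nil => simp [Q]
  | cons a t ih =>
      have hq : ∀ e : Fin n → ℤ, Q (a :: t) e = ((x n a) ^ 2) ^ e a * Q t e := by
        intro e; simp [Q]
      rw [hq, hq]
      have step : (x n i)⁻¹ * ((x n a) ^ 2) ^ c a * x n i
          = ((x n a) ^ 2) ^ (if a = i then c a else -(c a)) := by
        rcases eq_or_ne a i with rfl | hai
        · simp; group
        · have h := conj_sq i a (Ne.symm hai)
          have hsc : SemiconjBy (x n i) ((x n a ^ 2)⁻¹) (x n a ^ 2) := by
            show x n i * (x n a ^ 2)⁻¹ = x n a ^ 2 * x n i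
            rw [← h]; group
          have hz := hsc.zpow_right (c a)
          have hz' : (x n a ^ 2) ^ c a * x n i = x n i * (x n a ^ 2) ^ (-(c a)) := by
            rw [← hz, inv_zpow, zpow_neg]
          rw [if_neg hai]
          calc (x n i)⁻¹ * (x n a ^ 2) ^ c a * x n i
              = (x n i)⁻¹ * ((x n a ^ 2) ^ c a * x n i) := by group
            _ = (x n i)⁻¹ * (x n i * (x n a ^ 2) ^ (-(c a))) := by rw [hz']
            _ = (x n a ^ 2) ^ (-(c a)) := by group
      calc (x n i)⁻¹ * (((x n a) ^ 2) ^ c a * Q t c) * x n i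
          = ((x n i)⁻¹ * ((x n a) ^ 2) ^ c a * x n i) * ((x n i)⁻¹ * Q t c * x n i) := by group
        _ = _ := by rw [step, ih]

lemma f_sq (𝔞 : Matrix (Fin n) (Fin n) ℤ) (f : HW n →* HW n)
    (hf : ∀ i, f (x n i) = x n i * aElt n 𝔞 i) (j : Fin n) :
    f ((x n j) ^ 2) = ((x n j) ^ 2) ^ (1 + 2 * 𝔞 j j) := by
  have hA : aElt n 𝔞 j = Q (List.finRange n) (𝔞 j) := rfl
  have : f ((x n j) ^ 2) = (x n j * aElt n 𝔞 j) ^ 2 := by rw [map_pow, hf]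
  rw [this, hA]
  have expand : (x n j * Q (List.finRange n) (𝔞 j)) ^ 2
      = (x n j) ^ 2 * ((x n j)⁻¹ * Q (List.finRange n) (𝔞 j) * x n j
          * Q (List.finRange n) (𝔞 j)) := by rw [sq]; group
  rw [expand, conj_Q, ← Q_add]
  have hdelta : Q (List.finRange n)
      ((fun k => if k = j then 𝔞 j k else -(𝔞 j k)) + 𝔞 j)
      = ((x n j) ^ 2) ^ (2 * 𝔞 j j) := by
    apply Q_delta (List.finRange n) (List.nodup_finRange n) j (List.mem_finRange j)
    intro k
    rcases eq_or_ne k j with rfl | hkj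
    · simp [two_mul]
    · simp [hkj]
  rw [hdelta, zpow_add, zpow_one]

end HWaux

open HWaux

/-- Lemma (Statement 2): `t_𝔞 ∘ t_𝔟 = t_{𝔞 * 𝔟}` for all `𝔞, 𝔟 ∈ M_n(ℤ)`,
where `t_𝔞` is the unique endomorphism of `G_n` with `t_𝔞(x_i) = x_i a_i`. -/
theorem stmt2 (n : ℕ) (𝔞 𝔟 : Matrix (Fin n) (Fin n) ℤ) (f g h : HW n →* HW n)
    (hf : ∀ i, f (x n i) = x n i * aElt n 𝔞 i)
    (hg : ∀ i, g (x n i) = x n i * aElt n 𝔟 i)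
    (hh : ∀ i, h (x n i) = x n i * aElt n (mstar n 𝔞 𝔟) i) :
    f.comp g = h := by
  apply PresentedGroup.ext
  intro i
  have hx : ∀ i : Fin n, (PresentedGroup.of i : HW n) = x n i := fun _ => rfl
  rw [MonoidHom.comp_apply, hx, hg i, map_mul, hf i, hh i]
  -- f (aElt n 𝔟 i) = Q (fun j => (1 + 2 * 𝔞 j j) * 𝔟 i j)
  have hfQ : f (aElt n 𝔟 i) = Q (List.finRange n) (fun j => (1 + 2 * 𝔞 j j) * 𝔟 i j) := by
    show f (Q (List.finRange n) (𝔟 i)) = _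
    unfold Q
    rw [map_list_prod, List.map_map]
    refine congrArg List.prod (List.map_congr_left fun j _ => ?_)
    show f (((x n j) ^ 2) ^ 𝔟 i j) = _
    rw [map_zpow, f_sq 𝔞 f hf j, ← zpow_mul]
  have hms : aElt n (mstar n 𝔞 𝔟) i
      = Q (List.finRange n) (𝔞 i + fun j => (1 + 2 * 𝔞 j j) * 𝔟 i j) := rfl
  rw [hfQ, hms, Q_add]
  show x n i * aElt n 𝔞 i * _ = x n i * (Q _ (𝔞 i) * _)
  rw [mul_assoc]
  rfl
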